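/- arXiv:2007.02505 — 2 statements merged into one kernel-verified Lean document; each statement's English description precedes it below -/
import Mathlib

section
/- Let f, h ∈ R be homogeneous polynomials with f ≠ 0 of degree d ≥ 1, let s ≥ 1 be an integer, and let F be a homogeneous polynomial of degree ν < s·d with F ∈ (f, h)^s. Then h divides F. (This is the step in the proof of Theorem 2.5 where membership of a low-degree form in the s-th power of the complete intersection ideal (f, h) = (f^s, f^{s−1}h, …, h^s) forces divisibility by h.) -/
/-!
Since `(f, h)^s ⊆ (f^s) + (h)`, write `F = a f^s + g h`. Take degree-`ν` components: `F` is its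
own component, that of `a f^s` vanishes because `f^s` is homogeneous of degree `s d > ν`, and that
of `g h` is `h` times a homogeneous component of `g`.
-/

theorem Ideal.sup_pow_le_pow_sup {R : Type*} [CommSemiring R] (I J : Ideal R) (n : ℕ) :
    (I ⊔ J) ^ n ≤ I ^ n ⊔ J := by
  induction n with
  | zero => simp
  | succ n ih =>
    calc (I ⊔ J) ^ (n + 1) = (I ⊔ J) ^ n * (I ⊔ J) := pow_succ _ _
    _ ≤ (I ^ n ⊔ J) * (I ⊔ J) := Ideal.mul_mono_left ih
    _ ≤ I ^ (n + 1) ⊔ J := by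
      rw [Ideal.sup_mul, Ideal.mul_sup, Ideal.mul_sup, pow_succ]
      exact sup_le (sup_le le_sup_left (Ideal.mul_le_right.trans le_sup_right))
        (le_sup_of_le_right (sup_le Ideal.mul_le_left Ideal.mul_le_right))

namespace MvPolynomial

variable {σ R : Type*} [CommSemiring R]

theorem homogeneousComponent_mul_of_isHomogeneous {p : MvPolynomial σ R} {t : ℕ}
    (hp : p.IsHomogeneous t) (q : MvPolynomial σ R) (n : ℕ) :
    homogeneousComponent n (p * q) =
      if t ≤ n then p * homogeneousComponent (n - t) q else 0 := by
  conv_lhs => rw [← sum_homogeneousComponent q, Finset.mul_sum, map_sum]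
  have hterm (j : ℕ) : homogeneousComponent n (p * homogeneousComponent j q) =
      if j = n - t ∧ t ≤ n then p * homogeneousComponent j q else 0 := by
    rw [homogeneousComponent_of_mem (hp.mul (homogeneousComponent_isHomogeneous j q))]
    exact if_congr (by omega) rfl rfl
  simp_rw [hterm, ite_and]
  split_ifs with htn
  · rw [Finset.sum_ite_eq']
    split_ifs with hmem
    · rfl
    · rw [homogeneousComponent_eq_zero _ _ (by rw [Finset.mem_range] at hmem; omega), mul_zero]
  · simp

end MvPolynomial

open MvPolynomial

theorem dvd_of_mem_pow_span_pair_general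
    {k : Type*} [Field k] (m : ℕ)
    (f h F : MvPolynomial (Fin (m + 1)) k) (d e s ν : ℕ)
    (hfhom : f.IsHomogeneous d) (hhhom : h.IsHomogeneous e)
    (hFhom : F.IsHomogeneous ν) (hν : ν < s * d)
    (hmem : F ∈ (Ideal.span {f, h}) ^ s) :
    h ∣ F := by
  rw [Ideal.span_insert] at hmem
  have hsplit := Ideal.sup_pow_le_pow_sup _ _ s hmem
  rw [Ideal.span_singleton_pow] at hsplit
  obtain ⟨_, hfs, _, hh, hF⟩ := Submodule.mem_sup.mp hsplit
  obtain ⟨a, rfl⟩ := Ideal.mem_span_singleton.mp hfs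
  obtain ⟨g, rfl⟩ := Ideal.mem_span_singleton.mp hh
  have hlow : ¬ d * s ≤ ν := by rw [mul_comm]; omega
  rw [← homogeneousComponent_eq_self hFhom, ← hF, map_add,
    homogeneousComponent_mul_of_isHomogeneous (hfhom.pow s), if_neg hlow, zero_add,
    homogeneousComponent_mul_of_isHomogeneous hhhom]
  split_ifs
  · exact dvd_mul_right h _
  · exact dvd_zero h

/-- If a homogeneous polynomial `F` of degree `ν < s·d` lies in `(f, h)^s`, where `f` is
homogeneous of degree `d ≥ 1` and `h` is homogeneous, then `h` divides `F`. -/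
theorem dvd_of_mem_pow_span_pair
    {k : Type*} [Field k] (m : ℕ) (hm : 1 ≤ m)
    (f h F : MvPolynomial (Fin (m + 1)) k) (d e s ν : ℕ)
    (hd : 1 ≤ d) (hf0 : f ≠ 0) (hfhom : f.IsHomogeneous d) (hhhom : h.IsHomogeneous e)
    (hs : 1 ≤ s) (hFhom : F.IsHomogeneous ν) (hν : ν < s * d)
    (hmem : F ∈ (Ideal.span {f, h}) ^ s) :
    h ∣ F :=
  dvd_of_mem_pow_span_pair_general m f h F d e s ν hfhom hhhom hFhom hν hmem
end

section
/- Let p, q ∈ k^{n+1} be nonzero vectors with p_i = 1 and q_l = 1 for some indices i, l, and assume p and q are not proportional (so they represent two distinct points of projective n-space over k). If g ∈ R divides f_j − p_j · f_i for every j and also divides f_j − q_j · f_l for every j, then g divides every f_j; in particular, since gcd(f_0,…,f_n) = 1, g is a nonzero constant. Consequently, greatest common divisors h_p of {f_j − p_j f_i}_j and h_q of {f_j − q_j f_l}_j satisfy gcd(h_p, h_q) = 1. (This is the pairwise-coprimality claim gcd(h_y, h_{y'}) = 1 for distinct points y ≠ y' used in the proof of Theorem 2.5.) -/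
/-! Modulo `g`, every `f j` is both `p j • f i` and `q j • f l`. If `f i` survived modulo `g`,
comparing the two expressions would give `p = p l • q` with `p l ≠ 0`, making `p` and `q`
proportional. So every `f j` vanishes modulo `g`, and the coprimality of the `f j` makes `g` a
unit. -/

open MvPolynomial

theorem eq_zero_of_eq_smul_of_eq_smul {k M ι : Type*} [Field k] [AddCommGroup M] [Module k M]
    {v : ι → M} {p q : ι → k} {i l : ι} (hprop : ∀ c : k, c • p ≠ q)
    (hvp : ∀ j, v j = p j • v i) (hvq : ∀ j, v j = q j • v l) : v = 0 := by
  by_contra hv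
  have hvi : v i ≠ 0 := fun h => hv <| funext fun j => by rw [hvp j, h, smul_zero, Pi.zero_apply]
  have hpq : ∀ j, q j * p l = p j := fun j =>
    smul_left_injective k hvi <| by simp only [mul_smul, ← hvp l, ← hvq j, ← hvp j]
  have hpl : p l ≠ 0 := fun h =>
    hv <| funext fun j => by rw [hvq j, hvp l, h, zero_smul, smul_zero, Pi.zero_apply]
  exact hprop (p l)⁻¹ <| funext fun j => by
    rw [Pi.smul_apply, smul_eq_mul, ← hpq j, mul_comm, mul_assoc, mul_inv_cancel₀ hpl, mul_one]

theorem dvd_of_forall_dvd_sub_smul {k A ι : Type*} [Field k] [CommRing A] [Algebra k A]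
    {f : ι → A} {p q : ι → k} {i l : ι} (hprop : ∀ c : k, c • p ≠ q) {g : A}
    (hgp : ∀ j, g ∣ f j - p j • f i)
    (hgq : ∀ j, g ∣ f j - q j • f l) (j : ι) :
    g ∣ f j := by
  let π := Ideal.Quotient.mkₐ k (Ideal.span {g})
  have hπ : ∀ (r : k) (a b : A), g ∣ a - r • b → π a = r • π b := by
    intro r a b h
    rw [← sub_eq_zero, ← map_smul, ← map_sub]
    exact Ideal.Quotient.eq_zero_iff_dvd _ _ |>.mpr h
  have hv := eq_zero_of_eq_smul_of_eq_smul (v := fun j => π (f j)) hprop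
    (fun j => hπ _ _ _ (hgp j)) (fun j => hπ _ _ _ (hgq j))
  exact (Ideal.Quotient.eq_zero_iff_dvd _ _).mp (congrFun hv j)

theorem gcds_of_distinct_points_coprime_general
    {k : Type*} [Field k] (m n : ℕ)
    (f : Fin (n + 1) → MvPolynomial (Fin (m + 1)) k)
    (hfgcd : ∀ g : MvPolynomial (Fin (m + 1)) k, (∀ j, g ∣ f j) → IsUnit g)
    (p q : Fin (n + 1) → k)
    (i l : Fin (n + 1))
    (hprop : ∀ c : k, c • p ≠ q) :
    (∀ g : MvPolynomial (Fin (m + 1)) k,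
        (∀ j, g ∣ (f j - C (p j) * f i)) → (∀ j, g ∣ (f j - C (q j) * f l)) →
          (∀ j, g ∣ f j) ∧ IsUnit g)
    ∧ (∀ hp hq : MvPolynomial (Fin (m + 1)) k,
        (∀ j, hp ∣ (f j - C (p j) * f i)) →
        (∀ g : MvPolynomial (Fin (m + 1)) k, (∀ j, g ∣ (f j - C (p j) * f i)) → g ∣ hp) →
        (∀ j, hq ∣ (f j - C (q j) * f l)) →
        (∀ g : MvPolynomial (Fin (m + 1)) k, (∀ j, g ∣ (f j - C (q j) * f l)) → g ∣ hq) →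
        ∀ g : MvPolynomial (Fin (m + 1)) k, g ∣ hp → g ∣ hq → IsUnit g) := by
  have hdvd : ∀ g : MvPolynomial (Fin (m + 1)) k,
      (∀ j, g ∣ f j - C (p j) * f i) → (∀ j, g ∣ f j - C (q j) * f l) → ∀ j, g ∣ f j :=
    fun _ hgp hgq => dvd_of_forall_dvd_sub_smul hprop (by simpa only [C_mul'] using hgp)
      (by simpa only [C_mul'] using hgq)
  refine ⟨fun g hgp hgq => ⟨hdvd g hgp hgq, hfgcd g (hdvd g hgp hgq)⟩, ?_⟩
  intro hp hq hhp _ hhq _ g hg_hp hg_hq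
  exact hfgcd g (hdvd g (fun j => hg_hp.trans (hhp j)) (fun j => hg_hq.trans (hhq j)))

/-- Pairwise coprimality of the gcd's attached to two distinct points: if `g` divides all
`f_j − p_j f_i` and all `f_j − q_j f_l` for non-proportional `p, q`, then `g` divides every
`f_j`, hence is a unit; consequently `gcd(h_p, h_q) = 1`. -/
theorem gcds_of_distinct_points_coprime
    {k : Type*} [Field k] (m n d : ℕ) (hm : 1 ≤ m) (hd : 1 ≤ d)
    (f : Fin (n + 1) → MvPolynomial (Fin (m + 1)) k)
    (hfhom : ∀ j, (f j).IsHomogeneous d)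
    (hfgcd : ∀ g : MvPolynomial (Fin (m + 1)) k, (∀ j, g ∣ f j) → IsUnit g)
    (p q : Fin (n + 1) → k) (hp0 : p ≠ 0) (hq0 : q ≠ 0)
    (i l : Fin (n + 1)) (hpi : p i = 1) (hql : q l = 1)
    (hprop : ∀ c : k, c • p ≠ q) :
    (∀ g : MvPolynomial (Fin (m + 1)) k,
        (∀ j, g ∣ (f j - C (p j) * f i)) → (∀ j, g ∣ (f j - C (q j) * f l)) →
          (∀ j, g ∣ f j) ∧ IsUnit g)
    ∧ (∀ hp hq : MvPolynomial (Fin (m + 1)) k,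
        (∀ j, hp ∣ (f j - C (p j) * f i)) →
        (∀ g : MvPolynomial (Fin (m + 1)) k, (∀ j, g ∣ (f j - C (p j) * f i)) → g ∣ hp) →
        (∀ j, hq ∣ (f j - C (q j) * f l)) →
        (∀ g : MvPolynomial (Fin (m + 1)) k, (∀ j, g ∣ (f j - C (q j) * f l)) → g ∣ hq) →
        ∀ g : MvPolynomial (Fin (m + 1)) k, g ∣ hp → g ∣ hq → IsUnit g) :=
  gcds_of_distinct_points_coprime_general m n f hfgcd p q i l hprop
end
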